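/- arXiv:2305.08174 — 5 statements merged into one kernel-verified Lean document; each statement's English description precedes it below -/
import Mathlib

section
/- Let Γ be a nonempty closed subset of EuclideanSpace ℝ (Fin n), let d(x) = infDist(x, Γ), and let x ∉ Γ be a point at which d is differentiable. If y ∈ Γ is a closest point to x, i.e., dist(x, y) = infDist(x, Γ), then the gradient of d at x equals the unit vector (x − y) / ‖x − y‖. -/
/-!
Along the segment from `x` to a closest point `y`, the distance to `Γ` drops linearly,
at unit speed, so the derivative of `infDist · Γ` at `x` in the direction `x - y` equals
`‖x - y‖`. Since `infDist · Γ` is `1`-Lipschitz, its gradient has norm at most `1`, and the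
equality case of Cauchy–Schwarz forces it to be the unit vector along `x - y`.
-/

open Metric AffineMap Set
open scoped RealInnerProductSpace

section
variable {E : Type*} [NormedAddCommGroup E] [NormedSpace ℝ E] {s : Set E} {x y : E}

theorem infDist_lineMap_of_dist_eq_infDist (hy : y ∈ s) (hxy : dist x y = infDist x s)
    {t : ℝ} (ht : t ∈ Icc (0 : ℝ) 1) : infDist (lineMap x y t) s = (1 - t) * infDist x s := by
  obtain ⟨ht₀, ht₁⟩ := ht
  apply le_antisymm
  · calc infDist (lineMap x y t) s ≤ dist (lineMap x y t) y := infDist_le_dist_of_mem hy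
      _ = (1 - t) * infDist x s := by
        rw [dist_lineMap_right, Real.norm_of_nonneg (by linarith), hxy]
  · have := infDist_le_infDist_add_dist (s := s) (x := x) (y := lineMap x y t)
    rw [dist_left_lineMap, Real.norm_of_nonneg ht₀, hxy] at this
    linarith

theorem HasFDerivAt.apply_sub_eq_infDist {f' : E →L[ℝ] ℝ}
    (hf : HasFDerivAt (infDist · s) f' x) (hy : y ∈ s) (hxy : dist x y = infDist x s) :
    f' (x - y) = infDist x s := by
  have hunique : UniqueDiffWithinAt ℝ (Icc (0 : ℝ) 1) 0 :=
    uniqueDiffOn_Icc zero_lt_one 0 (left_mem_Icc.2 zero_le_one)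
  have hchain : HasDerivWithinAt (fun t : ℝ => infDist (lineMap x y t) s) (f' (y - x))
      (Icc 0 1) 0 := by
    have hf₀ : HasFDerivAt (infDist · s) f' (lineMap x y (0 : ℝ)) := by simpa using hf
    exact (hf₀.comp_hasDerivAt 0 hasDerivAt_lineMap).hasDerivWithinAt
  have hlinear : HasDerivWithinAt (fun t : ℝ => infDist (lineMap x y t) s) (-infDist x s)
      (Icc 0 1) 0 := by
    have hline : HasDerivAt (fun t : ℝ => (1 - t) * infDist x s) (-infDist x s) 0 := by
      simpa using ((hasDerivAt_id (0 : ℝ)).const_sub 1).mul_const (infDist x s)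
    refine hline.hasDerivWithinAt.congr (fun t ht => ?_) ?_
    · exact infDist_lineMap_of_dist_eq_infDist hy hxy ht
    · exact infDist_lineMap_of_dist_eq_infDist hy hxy (left_mem_Icc.2 zero_le_one)
  have := hunique.eq_deriv _ hchain hlinear
  rw [← neg_sub, map_neg, this, neg_neg]

end

theorem eq_inv_norm_smul_of_norm_le_one_of_inner_eq_norm {F : Type*} [NormedAddCommGroup F]
    [InnerProductSpace ℝ F] {g v : F} (hg : ‖g‖ ≤ 1) (hgv : ⟪g, v⟫ = ‖v‖) (hv : v ≠ 0) :
    g = ‖v‖⁻¹ • v := by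
  have hv' : 0 < ‖v‖ := norm_pos_iff.2 hv
  have hg₁ : ‖g‖ = 1 := by
    have := real_inner_le_norm g v
    rw [hgv] at this
    nlinarith
  have := inner_eq_norm_mul_iff_real.1 (by rw [hgv, hg₁, one_mul])
  rw [hg₁, one_smul] at this
  calc g = ‖v‖⁻¹ • (‖v‖ • g) := by rw [smul_smul, inv_mul_cancel₀ hv'.ne', one_smul]
    _ = ‖v‖⁻¹ • v := by rw [this]

theorem gradient_infDist_eq_unit_dir_general
    {n : ℕ} (Γ : Set (EuclideanSpace ℝ (Fin n)))
    (x : EuclideanSpace ℝ (Fin n)) (hx : x ∉ Γ)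
    (hd : DifferentiableAt ℝ (fun z => Metric.infDist z Γ) x)
    (y : EuclideanSpace ℝ (Fin n)) (hy : y ∈ Γ)
    (hxy : dist x y = Metric.infDist x Γ) :
    gradient (fun z => Metric.infDist z Γ) x = ‖x - y‖⁻¹ • (x - y) := by
  set g := gradient (fun z => infDist z Γ) x
  have hinner : ⟪g, x - y⟫ = ‖x - y‖ := by
    rw [← dist_eq_norm, hxy, ← InnerProductSpace.toDual_apply_apply]
    exact hd.hasGradientAt.hasFDerivAt.apply_sub_eq_infDist hy hxy
  have hnorm : ‖g‖ ≤ 1 := by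
    unfold g gradient
    rw [LinearIsometryEquiv.norm_map]
    exact norm_fderiv_le_of_lipschitz ℝ (lipschitz_infDist_pt Γ)
  exact eq_inv_norm_smul_of_norm_le_one_of_inner_eq_norm hnorm hinner
    (sub_ne_zero.2 (ne_of_mem_of_not_mem hy hx).symm)

/-- At a point of differentiability of the distance function to a closed set `Γ`,
the gradient is the unit vector pointing from the closest point `y ∈ Γ` toward `x`. -/
theorem gradient_infDist_eq_unit_dir
    {n : ℕ} (Γ : Set (EuclideanSpace ℝ (Fin n))) (hne : Γ.Nonempty) (hcl : IsClosed Γ)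
    (x : EuclideanSpace ℝ (Fin n)) (hx : x ∉ Γ)
    (hd : DifferentiableAt ℝ (fun z => Metric.infDist z Γ) x)
    (y : EuclideanSpace ℝ (Fin n)) (hy : y ∈ Γ)
    (hxy : dist x y = Metric.infDist x Γ) :
    gradient (fun z => Metric.infDist z Γ) x = ‖x - y‖⁻¹ • (x - y) :=
  gradient_infDist_eq_unit_dir_general Γ x hx hd y hy hxy
end

section
/- Let A ⊆ EuclideanSpace ℝ (Fin n) be an open bounded set whose frontier Γ = frontier A is nonempty, and define the signed distance function u by u(x) = infDist(x, Γ) if x ∉ A and u(x) = −infDist(x, Γ) if x ∈ A. Let x ∉ Γ be a point at which u is differentiable, and write ∇u(x) for the gradient of u at x. Then the point x_Γ := x − u(x) • ∇u(x) belongs to Γ, and it is a closest point of Γ to x, i.e., dist(x, x_Γ) = infDist(x, Γ). -/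
/-!
Let `d = infDist · Γ` and let `y ∈ Γ` be a nearest point to `x` (`Γ` is closed and nonempty in a
proper space). Along the segment from `x` to `y` the distance decreases linearly, so
`⟪∇d x, y - x⟫ = -d x = -‖y - x‖`, while `‖∇d x‖ ≤ 1` because `d` is 1-Lipschitz. Equality in
Cauchy–Schwarz then forces `y = x - d x • ∇d x`. Off `Γ` the signed distance `u` agrees near `x`
with `d` or with `-d`, and in both cases `u x • ∇u x = d x • ∇d x`.
-/

open Metric InnerProductSpace Filter Topology AffineMap
open scoped Gradient

section InnerProductSpace

variable {E : Type*} [NormedAddCommGroup E]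

theorem infDist_lineMap_of_infDist_eq_dist [NormedSpace ℝ E] {S : Set E} {x y : E}
    (hy : y ∈ S) (hxy : infDist x S = dist x y) {t : ℝ} (ht : t ∈ Set.Icc (0 : ℝ) 1) :
    infDist (lineMap x y t) S = (1 - t) * infDist x S := by
  have hright : dist (lineMap x y t) y = (1 - t) * infDist x S := by
    rw [dist_lineMap_right, Real.norm_of_nonneg (by linarith [ht.2]), hxy]
  have hleft : dist (lineMap x y t) x = t * infDist x S := by
    rw [dist_lineMap_left, Real.norm_of_nonneg ht.1, hxy]
  have hle : infDist (lineMap x y t) S ≤ (1 - t) * infDist x S :=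
    hright ▸ infDist_le_dist_of_mem hy
  have hge : infDist x S ≤ infDist (lineMap x y t) S + t * infDist x S :=
    hleft ▸ dist_comm x (lineMap x y t) ▸ infDist_le_infDist_add_dist
  linarith

variable [InnerProductSpace ℝ E] [CompleteSpace E]

theorem inner_gradient_infDist_sub_eq {S : Set E} {x y : E} (hy : y ∈ S)
    (hxy : infDist x S = dist x y) (hd : DifferentiableAt ℝ (infDist · S) x) :
    ⟪∇ (infDist · S) x, y - x⟫_ℝ = -infDist x S := by
  set φ : ℝ → ℝ := fun t => infDist (lineMap x y t) S
  have hline : HasDerivAt φ ⟪∇ (infDist · S) x, y - x⟫_ℝ 0 := by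
    have hF : HasFDerivAt (infDist · S) (toDual ℝ E (∇ (infDist · S) x))
        (lineMap x y (0 : ℝ)) := by
      simpa using hd.hasGradientAt.hasFDerivAt
    have := hF.comp_hasDerivAt (0 : ℝ) hasDerivAt_lineMap
    rwa [toDual_apply_apply] at this
  have hseg : HasDerivWithinAt φ (-infDist x S) (Set.Icc 0 1) 0 := by
    have hlin : HasDerivAt (fun t : ℝ => (1 - t) * infDist x S) (-infDist x S) 0 := by
      simpa using ((hasDerivAt_id (0 : ℝ)).const_sub 1).mul_const (infDist x S)
    exact hlin.hasDerivWithinAt.congr (fun t ht => infDist_lineMap_of_infDist_eq_dist hy hxy ht)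
      (by simp [φ])
  have hunique : UniqueDiffWithinAt ℝ (Set.Icc (0 : ℝ) 1) 0 :=
    uniqueDiffOn_Icc zero_lt_one 0 (by simp)
  exact (hline.hasDerivWithinAt.derivWithin hunique).symm.trans (hseg.derivWithin hunique)

theorem gradient_neg (f : E → ℝ) (x : E) : ∇ (-f) x = -∇ f x := by
  rw [gradient, fderiv_neg, map_neg, gradient]

theorem norm_gradient_infDist_le_one (S : Set E) (x : E) : ‖∇ (infDist · S) x‖ ≤ 1 := by
  rw [← (toDual ℝ E).norm_map, toDual_gradient]
  exact_mod_cast norm_fderiv_le_of_lipschitz ℝ (lipschitz_infDist_pt S)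

theorem sub_infDist_smul_gradient_infDist_eq {S : Set E} {x y : E} (hy : y ∈ S)
    (hxy : infDist x S = dist x y) (hd : DifferentiableAt ℝ (infDist · S) x) :
    x - infDist x S • ∇ (infDist · S) x = y := by
  set g := ∇ (infDist · S) x
  set r := infDist x S
  have hinner : ⟪g, y - x⟫_ℝ = -r := inner_gradient_infDist_sub_eq hy hxy hd
  have hnorm : ‖y - x‖ = r := by rw [← dist_eq_norm, dist_comm, hxy]
  have hg : ‖g‖ ≤ 1 := norm_gradient_infDist_le_one S x
  have hr : 0 ≤ r := infDist_nonneg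
  -- Equality in Cauchy–Schwarz: `‖(y - x) + r • g‖² = r²‖g‖² - r² ≤ 0`.
  have hsq : ‖(y - x) + r • g‖ ^ 2 ≤ 0 := by
    rw [norm_add_sq_real, inner_smul_right, real_inner_comm, hinner, hnorm, norm_smul,
      Real.norm_of_nonneg hr]
    nlinarith [mul_le_mul_of_nonneg_left hg (mul_self_nonneg r), norm_nonneg g]
  have hzero : (y - x) + r • g = 0 := norm_eq_zero.1 (by nlinarith [norm_nonneg ((y - x) + r • g)])
  rw [← sub_eq_zero, ← neg_eq_zero, ← hzero]
  abel

end InnerProductSpace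

theorem eventuallyEq_neg_or_eventuallyEq_of_notMem_frontier {X β : Type*} [TopologicalSpace X]
    [Neg β] {A : Set X} {u g : X → β} {x : X} (hu_in : ∀ z ∈ A, u z = -g z)
    (hu_out : ∀ z ∉ A, u z = g z) (hx : x ∉ frontier A) :
    u =ᶠ[𝓝 x] -g ∨ u =ᶠ[𝓝 x] g := by
  by_cases hxA : x ∈ interior A
  · exact .inl <| eventually_of_mem (mem_interior_iff_mem_nhds.1 hxA) hu_in
  · have hxAc : x ∈ interior Aᶜ := by
      rw [interior_compl]
      exact fun hcl => hx ⟨hcl, hxA⟩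
    exact .inr <| eventually_of_mem (mem_interior_iff_mem_nhds.1 hxAc) hu_out

theorem signedDist_shortest_path_general
    {n : ℕ} (A : Set (EuclideanSpace ℝ (Fin n)))
    (hΓ : (frontier A).Nonempty)
    (u : EuclideanSpace ℝ (Fin n) → ℝ)
    (hu_in : ∀ x ∈ A, u x = -Metric.infDist x (frontier A))
    (hu_out : ∀ x ∉ A, u x = Metric.infDist x (frontier A))
    (x : EuclideanSpace ℝ (Fin n)) (hx : x ∉ frontier A)
    (hd : DifferentiableAt ℝ u x) :
    x - u x • gradient u x ∈ frontier A ∧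
      dist x (x - u x • gradient u x) = Metric.infDist x (frontier A) := by
  set d := fun z => infDist z (frontier A)
  have hlocal : u x • ∇ u x = d x • ∇ d x ∧ DifferentiableAt ℝ d x := by
    rcases eventuallyEq_neg_or_eventuallyEq_of_notMem_frontier (g := d) hu_in hu_out hx
      with hneg | hpos
    · refine ⟨?_, differentiableAt_neg_iff.1 (hd.congr_of_eventuallyEq hneg.symm)⟩
      rw [hneg.eq_of_nhds, hneg.gradient_eq, gradient_neg, Pi.neg_apply, neg_smul_neg]
    · exact ⟨by rw [hpos.eq_of_nhds, hpos.gradient_eq], hd.congr_of_eventuallyEq hpos.symm⟩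
  obtain ⟨y, hy, hxy⟩ := isClosed_frontier.exists_infDist_eq_dist hΓ x
  rw [hlocal.1, sub_infDist_smul_gradient_infDist_eq hy hxy hlocal.2]
  exact ⟨hy, hxy.symm⟩

/-- Shortest-path formula: at a point of differentiability of the signed distance function
`u` off the interface `Γ = frontier A`, the point `x - u x • ∇u x` lies on `Γ` and is a
closest point of `Γ` to `x`. -/
theorem signedDist_shortest_path
    {n : ℕ} (A : Set (EuclideanSpace ℝ (Fin n))) (hA : IsOpen A)
    (hbdd : Bornology.IsBounded A) (hΓ : (frontier A).Nonempty)
    (u : EuclideanSpace ℝ (Fin n) → ℝ)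
    (hu_in : ∀ x ∈ A, u x = -Metric.infDist x (frontier A))
    (hu_out : ∀ x ∉ A, u x = Metric.infDist x (frontier A))
    (x : EuclideanSpace ℝ (Fin n)) (hx : x ∉ frontier A)
    (hd : DifferentiableAt ℝ u x) :
    x - u x • gradient u x ∈ frontier A ∧
      dist x (x - u x • gradient u x) = Metric.infDist x (frontier A) :=
  signedDist_shortest_path_general A hΓ u hu_in hu_out x hx hd
end

section
/- Let Γ be a nonempty closed subset of a real inner product space E (e.g., EuclideanSpace ℝ (Fin n)), let x ∉ Γ, and let y ∈ Γ be a closest point to x, i.e., dist(x, y) = infDist(x, Γ). Then for every t with 0 < t ≤ 1, the point z = x + t • (y − x) has y as its unique closest point in Γ: every p ∈ Γ with dist(z, p) = infDist(z, Γ) satisfies p = y. -/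
/-- At any point strictly inside the minimizing segment from `x ∉ Γ` to its closest point
`y ∈ Γ` (including `y` itself, i.e. for `0 < t ≤ 1`), the closest point of `Γ` is unique
and equal to `y`. -/
theorem closest_point_unique_along_segment
    {E : Type*} [NormedAddCommGroup E] [InnerProductSpace ℝ E]
    (Γ : Set E) (hne : Γ.Nonempty) (hcl : IsClosed Γ)
    (x : E) (hx : x ∉ Γ) (y : E) (hy : y ∈ Γ)
    (hxy : dist x y = Metric.infDist x Γ)
    (t : ℝ) (ht0 : 0 < t) (ht1 : t ≤ 1) :
    ∀ p ∈ Γ, dist (x + t • (y - x)) p = Metric.infDist (x + t • (y - x)) Γ → p = y := by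
  intro p hp hdp
  set z := x + t • (y - x) with hz
  set d := dist x y with hd
  have hxney : x ≠ y := fun h => hx (h ▸ hy)
  have hdpos : 0 < d := dist_pos.2 hxney
  have hdistxz : dist x z = t * d := by
    have : z - x = t • (y - x) := by simp [hz]
    rw [dist_eq_norm, norm_sub_rev, this, norm_smul,
      Real.norm_eq_abs, abs_of_pos ht0, hd, dist_eq_norm, norm_sub_rev]
  have hdistzy : dist z y = (1 - t) * d := by
    have hzy : z - y = (1 - t) • (x - y) := by
      rw [hz]; module
    rw [dist_eq_norm, hzy, norm_smul, Real.norm_eq_abs, abs_of_nonneg (by linarith),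
      hd, dist_eq_norm]
  have hle : Metric.infDist z Γ ≤ (1 - t) * d := hdistzy ▸ Metric.infDist_le_dist_of_mem hy
  have hdzp : dist z p ≤ (1 - t) * d := hdp ▸ hle
  have hdxp : d ≤ dist x p := hxy ▸ Metric.infDist_le_dist_of_mem hp
  have htri : dist x p ≤ dist x z + dist z p := dist_triangle x z p
  have hxp : dist x p = d := by nlinarith
  have heq : dist x z + dist z p = dist x p := by nlinarith
  have hseg : z ∈ segment ℝ x p := (dist_add_dist_eq_iff.1 heq).mem_segment
  obtain ⟨a, b, ha, hb, hab, habz⟩ := hseg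
  have hzx : z - x = b • (p - x) := by
    have : a = 1 - b := by linarith
    rw [← habz, this]; module
  have hzxt : z - x = t • (y - x) := by simp [hz]
  have hnorm : b * d = t * d := by
    have h1 : ‖z - x‖ = b * ‖p - x‖ := by
      rw [hzx, norm_smul, Real.norm_eq_abs, abs_of_nonneg hb]
    have h2 : ‖z - x‖ = t * ‖y - x‖ := by
      rw [hzxt, norm_smul, Real.norm_eq_abs, abs_of_pos ht0]
    have hpx : ‖p - x‖ = d := by rw [← hxp, dist_eq_norm']
    have hyx : ‖y - x‖ = d := by rw [hd, dist_eq_norm']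
    rw [hpx] at h1; rw [hyx] at h2; linarith
  have hbt : b = t := by
    have := mul_right_cancel₀ (ne_of_gt hdpos) hnorm
    exact this
  have : t • (p - x) = t • (y - x) := by rw [← hzxt, hzx, hbt]
  have := smul_right_injective E (ne_of_gt ht0) this
  exact sub_left_injective this
end

section
/- Let Γ be a nonempty closed subset of EuclideanSpace ℝ (Fin n), let d(x) = infDist(x, Γ), let x ∉ Γ, and let y ∈ Γ be a closest point to x, i.e., dist(x, y) = infDist(x, Γ). Then for every t with 0 < t < 1, the function d is differentiable at the point z = x + t • (y − x), and the gradient of d at z equals the unit vector (x − y)/‖x − y‖. -/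
/-!
On the segment from `x` to its closest point `y`, the distance function `d = infDist · Γ` is
squeezed between `w ↦ d x - ‖w - x‖` (since `d` is 1-Lipschitz) and `w ↦ ‖w - y‖` (since
`y ∈ Γ`). Both bounds touch `d` at every interior point `z` of the segment, and there both are
differentiable with the same gradient, the unit vector pointing from `y` to `x`.
-/

open Metric Filter Topology

theorem Metric.infDist_eq_dist_of_dist_add_dist_eq {α : Type*} [PseudoMetricSpace α]
    {s : Set α} {x y z : α} (hy : y ∈ s) (hxy : dist x y = infDist x s)
    (hz : dist x z + dist z y = dist x y) : infDist z s = dist z y :=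
  le_antisymm (infDist_le_dist_of_mem hy)
    (by linarith [infDist_le_infDist_add_dist (s := s) (x := x) (y := z)])

theorem HasFDerivAt.of_le_of_le {E : Type*} [NormedAddCommGroup E] [NormedSpace ℝ E]
    {l f u : E → ℝ} {L : StrongDual ℝ E} {z : E}
    (hl : HasFDerivAt l L z) (hu : HasFDerivAt u L z)
    (hlf : ∀ᶠ w in 𝓝 z, l w ≤ f w) (hfu : ∀ᶠ w in 𝓝 z, f w ≤ u w)
    (hlz : l z = f z) (huz : u z = f z) : HasFDerivAt f L z := by
  rw [hasFDerivAt_iff_isLittleO, Asymptotics.isLittleO_iff] at *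
  intro c hc
  filter_upwards [hl hc, hu hc, hlf, hfu] with w hlw huw h1 h2
  rw [Real.norm_eq_abs, abs_le] at *
  constructor <;> linarith

section InnerProductSpace

variable {E : Type*} [NormedAddCommGroup E] [InnerProductSpace ℝ E]

theorem hasFDerivAt_norm_sub {y z : E} (hz : z ≠ y) :
    HasFDerivAt (fun w => ‖w - y‖) (innerSL ℝ (NormedSpace.normalize (z - y))) z := by
  have hsqrt := ((hasStrictFDerivAt_norm_sq (z - y)).hasFDerivAt.comp z
    ((hasFDerivAt_id z).sub_const y)).sqrt (by simpa [sub_eq_zero] using hz)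
  simp only [Function.comp_def, id, Real.sqrt_sq (norm_nonneg _)] at hsqrt
  convert hsqrt using 1
  ext v
  simp [NormedSpace.normalize]
  field_simp

theorem hasGradientAt_infDist_of_dist_eq_infDist [CompleteSpace E] {s : Set E} {x y : E}
    (hy : y ∈ s) (hxy : dist x y = infDist x s) (hne : x ≠ y) {t : ℝ} (ht0 : 0 < t)
    (ht1 : t < 1) :
    HasGradientAt (infDist · s) (NormedSpace.normalize (x - y)) (x + t • (y - x)) := by
  set z := x + t • (y - x)
  have hzy : z - y = (1 - t) • (x - y) := by module
  have hzx : z - x = t • (y - x) := by module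
  have hnorm_zy : ‖z - y‖ = (1 - t) * ‖x - y‖ := by
    rw [hzy, norm_smul, Real.norm_of_nonneg (by linarith)]
  have hnorm_zx : ‖z - x‖ = t * ‖x - y‖ := by
    rw [hzx, norm_smul, Real.norm_of_nonneg ht0.le, norm_sub_rev]
  have hdz : infDist z s = ‖z - y‖ := by
    rw [← dist_eq_norm]
    refine infDist_eq_dist_of_dist_add_dist_eq hy hxy ?_
    rw [dist_comm x z, dist_eq_norm, dist_eq_norm, dist_eq_norm, hnorm_zx, hnorm_zy]
    ring
  have hupper : HasFDerivAt (fun w => ‖w - y‖) (innerSL ℝ (NormedSpace.normalize (x - y))) z := by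
    have hzy0 : z - y ≠ 0 := hzy ▸ smul_ne_zero (by linarith) (sub_ne_zero.mpr hne)
    have h := hasFDerivAt_norm_sub (sub_ne_zero.mp hzy0)
    rwa [hzy, NormedSpace.normalize_smul_of_pos (by linarith)] at h
  have hlower : HasFDerivAt (fun w => infDist x s - ‖w - x‖)
      (innerSL ℝ (NormedSpace.normalize (x - y))) z := by
    have hzx0 : z - x ≠ 0 := hzx ▸ smul_ne_zero ht0.ne' (sub_ne_zero.mpr hne.symm)
    have h := hasFDerivAt_norm_sub (sub_ne_zero.mp hzx0)
    rw [hzx, NormedSpace.normalize_smul_of_pos ht0, ← neg_sub x y, NormedSpace.normalize_neg,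
      map_neg] at h
    simpa using h.const_sub (infDist x s)
  refine hasGradientAt_iff_hasFDerivAt.mpr (hlower.of_le_of_le hupper ?_ ?_ ?_ hdz.symm)
  · exact Eventually.of_forall fun w => by
      linarith [infDist_le_infDist_add_dist (s := s) (x := x) (y := w), dist_eq_norm w x,
        dist_comm x w]
  · exact Eventually.of_forall fun w => by
      simpa [dist_eq_norm] using infDist_le_dist_of_mem hy (x := w)
  · rw [hdz, hnorm_zx, hnorm_zy, ← hxy, dist_eq_norm]
    ring

end InnerProductSpace

theorem infDist_differentiable_along_segment_general
    {n : ℕ} (Γ : Set (EuclideanSpace ℝ (Fin n)))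
    (x : EuclideanSpace ℝ (Fin n)) (hx : x ∉ Γ)
    (y : EuclideanSpace ℝ (Fin n)) (hy : y ∈ Γ)
    (hxy : dist x y = Metric.infDist x Γ)
    (t : ℝ) (ht0 : 0 < t) (ht1 : t < 1) :
    DifferentiableAt ℝ (fun z => Metric.infDist z Γ) (x + t • (y - x)) ∧
      gradient (fun z => Metric.infDist z Γ) (x + t • (y - x)) = ‖x - y‖⁻¹ • (x - y) := by
  have h := hasGradientAt_infDist_of_dist_eq_infDist hy hxy (ne_of_mem_of_not_mem hy hx).symm
    ht0 ht1
  exact ⟨h.differentiableAt, h.gradient⟩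

/-- The distance function to a nonempty closed set `Γ` is differentiable at every interior
point of a minimizing segment, and its gradient there is the unit vector from the closest
point `y` toward `x`. -/
theorem infDist_differentiable_along_segment
    {n : ℕ} (Γ : Set (EuclideanSpace ℝ (Fin n))) (hne : Γ.Nonempty) (hcl : IsClosed Γ)
    (x : EuclideanSpace ℝ (Fin n)) (hx : x ∉ Γ)
    (y : EuclideanSpace ℝ (Fin n)) (hy : y ∈ Γ)
    (hxy : dist x y = Metric.infDist x Γ)
    (t : ℝ) (ht0 : 0 < t) (ht1 : t < 1) :
    DifferentiableAt ℝ (fun z => Metric.infDist z Γ) (x + t • (y - x)) ∧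
      gradient (fun z => Metric.infDist z Γ) (x + t • (y - x)) = ‖x - y‖⁻¹ • (x - y) :=
  infDist_differentiable_along_segment_general Γ x hx y hy hxy t ht0 ht1
end

section
/- Let A ⊆ EuclideanSpace ℝ (Fin n) be an open bounded set whose frontier Γ = frontier A is nonempty, and define the signed distance function u by u(x) = infDist(x, Γ) if x ∉ A and u(x) = −infDist(x, Γ) if x ∈ A. Let x ∉ Γ be a point at which u is differentiable, with gradient ∇u(x). Then for every t ∈ [0, |u(x)|), u is differentiable at the point s(t) = x − t • sgn(u(x)) • ∇u(x) and the gradient of u at s(t) equals ∇u(x); here sgn(u(x)) denotes the sign (±1) of u(x). -/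
/-!
Write `σ = sgn u(x)`, `d = |u(x)|` and let `y ∈ Γ` be a nearest point to `x`. The function
`f = σ u` is 1-Lipschitz, lies below the cone `dist · y` and touches it at `x`, hence along the
whole segment `[x, y]`. Differentiating along the segment and using `‖∇f(x)‖ ≤ 1` forces
`x - y = d ∇f(x)` (equality in Cauchy–Schwarz). At `z = x - t ∇f(x)` the function `f` is then
squeezed between the translate `f(· + t ∇f(x)) - t` (Lipschitz) and a paraboloid lying above the
cone (AM–GM); both touch `f` at `z` with gradient `∇f(x)`, so `∇f(z) = ∇f(x)`.
-/

open Metric Set Filter Topology Asymptotics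
open scoped RealInnerProductSpace

theorem IsPreconnected.inter_frontier_nonempty {X : Type*} [TopologicalSpace X] {S A : Set X}
    (hS : IsPreconnected S) {a b : X} (ha : a ∈ S ∩ A) (hb : b ∈ S \ A) :
    (S ∩ frontier A).Nonempty := by
  by_contra! hSΓ
  have hS_int : ∀ w ∈ S, w ∈ closure A → w ∈ interior A := fun w hw hwA =>
    by_contra fun hwi => (hSΓ.subset ⟨hw, hwA, hwi⟩ : w ∈ (∅ : Set X))
  have hcover : S ⊆ interior A ∪ (closure A)ᶜ := fun w hw =>
    (em (w ∈ closure A)).imp (hS_int w hw) id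
  obtain ⟨w, -, hwi, hwc⟩ := hS _ _ isOpen_interior isClosed_closure.isOpen_compl hcover
    ⟨a, ha.1, hS_int a ha.1 (subset_closure ha.2)⟩
    ⟨b, hb.1, fun hbc => hb.2 (interior_subset (hS_int b hb.1 hbc))⟩
  exact hwc (interior_subset_closure hwi)

theorem hasFDerivAt_of_squeeze {E : Type*} [NormedAddCommGroup E] [NormedSpace ℝ E]
    {f ψ φ : E → ℝ} {L : E →L[ℝ] ℝ} {z : E} (hψ : HasFDerivAt ψ L z) (hφ : HasFDerivAt φ L z)
    (hψf : ∀ᶠ w in 𝓝 z, ψ w ≤ f w) (hfφ : ∀ᶠ w in 𝓝 z, f w ≤ φ w)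
    (hψz : ψ z = f z) (hφz : φ z = f z) : HasFDerivAt f L z := by
  refine .of_isLittleO <| IsBigO.trans_isLittleO (g := fun w =>
      ‖ψ w - ψ z - L (w - z)‖ + ‖φ w - φ z - L (w - z)‖) ?_
    (hψ.isLittleO.norm_left.add hφ.isLittleO.norm_left)
  refine .of_bound 1 ?_
  filter_upwards [hψf, hfφ] with w hψw hφw
  simp only [Real.norm_eq_abs, one_mul]
  rw [abs_of_nonneg (by positivity : 0 ≤ |ψ w - ψ z - L (w - z)| + |φ w - φ z - L (w - z)|),
    abs_le]
  constructor
  · linarith [neg_abs_le (ψ w - ψ z - L (w - z)), abs_nonneg (φ w - φ z - L (w - z))]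
  · linarith [le_abs_self (φ w - φ z - L (w - z)), abs_nonneg (ψ w - ψ z - L (w - z))]

theorem eq_dist_of_dist_add_dist_eq {X : Type*} [PseudoMetricSpace X] {f : X → ℝ} {x y w : X}
    (hf : LipschitzWith 1 f) (hle : ∀ w, f w ≤ dist w y) (hx : f x = dist x y)
    (hw : dist x w + dist w y = dist x y) : f w = dist w y := by
  have := hf.dist_le_mul x w
  rw [NNReal.coe_one, one_mul, Real.dist_eq, abs_le] at this
  linarith [hle w]

namespace Metric

open Classical in
noncomputable def signedInfDist {X : Type*} [PseudoMetricSpace X] (A : Set X) (x : X) : ℝ :=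
  if x ∈ A then -infDist x (frontier A) else infDist x (frontier A)

theorem abs_signedInfDist {X : Type*} [PseudoMetricSpace X] (A : Set X) (x : X) :
    |signedInfDist A x| = infDist x (frontier A) := by
  unfold signedInfDist
  split_ifs <;> simp [abs_of_nonneg infDist_nonneg]

section NormedSpace

variable {E : Type*} [NormedAddCommGroup E] [NormedSpace ℝ E] {A : Set E}

theorem infDist_add_infDist_frontier_le {a b : E} (ha : a ∈ A) (hb : b ∉ A) :
    infDist a (frontier A) + infDist b (frontier A) ≤ dist a b := by
  obtain ⟨c, hcS, hcΓ⟩ := (convex_segment a b).isPreconnected.inter_frontier_nonempty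
    ⟨left_mem_segment ℝ a b, ha⟩ ⟨right_mem_segment ℝ a b, hb⟩
  calc infDist a (frontier A) + infDist b (frontier A) ≤ dist a c + dist c b := by
        rw [dist_comm c b]
        exact add_le_add (infDist_le_dist_of_mem hcΓ) (infDist_le_dist_of_mem hcΓ)
    _ = dist a b := dist_add_dist_of_mem_segment hcS

theorem lipschitzWith_signedInfDist (A : Set E) : LipschitzWith 1 (signedInfDist A) := by
  refine LipschitzWith.of_dist_le_mul fun a b => ?_
  have hlip := (lipschitz_infDist_pt (frontier A)).dist_le_mul a b
  have hab := infDist_add_infDist_frontier_le (A := A) (a := a) (b := b)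
  have hba := infDist_add_infDist_frontier_le (A := A) (a := b) (b := a)
  rw [dist_comm b a] at hba
  simp only [NNReal.coe_one, one_mul, Real.dist_eq, abs_le] at hlip ⊢
  have h0a : 0 ≤ infDist a (frontier A) := infDist_nonneg
  have h0b : 0 ≤ infDist b (frontier A) := infDist_nonneg
  unfold signedInfDist
  split_ifs with ha hb hb
  · constructor <;> linarith
  · have := hab ha hb; constructor <;> linarith
  · have := hba hb ha; constructor <;> linarith
  · constructor <;> linarith

end NormedSpace

end Metric

section Gradient

variable {F : Type*} [NormedAddCommGroup F] [InnerProductSpace ℝ F] {f : F → ℝ} {g x y : F}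

theorem eq_smul_of_norm_le_one_of_inner_eq {v : F} {c : ℝ} (hg : ‖g‖ ≤ 1) (hv : ‖v‖ = |c|)
    (hgv : ⟪g, v⟫ = c) : v = c • g := by
  have hsq : ‖v - c • g‖ ^ 2 = c ^ 2 * (‖g‖ ^ 2 - 1) := by
    rw [norm_sub_sq_real, inner_smul_right, real_inner_comm, hgv, norm_smul, hv,
      Real.norm_eq_abs, mul_pow, sq_abs]
    ring
  have hle : ‖v - c • g‖ ^ 2 ≤ 0 := by
    rw [hsq]
    exact mul_nonpos_of_nonneg_of_nonpos (sq_nonneg c) (by nlinarith [norm_nonneg g])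
  exact sub_eq_zero.1 (norm_eq_zero.1 (pow_eq_zero_iff two_ne_zero |>.1
    (le_antisymm hle (sq_nonneg _))))

variable [CompleteSpace F]

theorem HasGradientAt.const_mul (hf : HasGradientAt f g x) (c : ℝ) :
    HasGradientAt (fun w => c * f w) (c • g) x := by
  rw [hasGradientAt_iff_hasFDerivAt] at hf ⊢
  simpa using hf.const_mul c

theorem LipschitzWith.norm_gradient_le {K : NNReal} (hf : LipschitzWith K f) :
    ‖gradient f x‖ ≤ K := by
  simpa [gradient] using norm_fderiv_le_of_lipschitz ℝ hf (x₀ := x)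

theorem HasGradientAt.inner_eq_of_affine_on_segment {v : F} {c : ℝ} (hf : HasGradientAt f g x)
    (hline : ∀ s ∈ Icc (0 : ℝ) 1, f (x + s • v) = f x + s * c) : ⟪g, v⟫ = c := by
  have hchain : HasDerivWithinAt (fun s : ℝ => f (x + s • v)) ⟪g, v⟫ (Icc 0 1) 0 := by
    have hpath : HasDerivAt (fun s : ℝ => x + s • v) v 0 := by
      simpa using ((hasDerivAt_id (0 : ℝ)).smul_const v).const_add x
    have hf0 : HasFDerivAt f (InnerProductSpace.toDual ℝ F g) (x + (0 : ℝ) • v) := by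
      simpa [hasGradientAt_iff_hasFDerivAt] using hf
    exact (hf0.comp_hasDerivAt 0 hpath).hasDerivWithinAt
  have haffine : HasDerivWithinAt (fun s : ℝ => f (x + s • v)) c (Icc 0 1) 0 := by
    have hlin : HasDerivAt (fun s : ℝ => f x + s * c) c 0 := by
      simpa using ((hasDerivAt_id (0 : ℝ)).mul_const c).const_add (f x)
    exact hlin.hasDerivWithinAt.congr hline (by simp)
  exact uniqueDiffOn_Icc_zero_one 0 ⟨le_rfl, zero_le_one⟩ |>.eq_deriv _ hchain haffine

theorem hasFDerivAt_inv_two_mul_norm_sub_sq_add_sq {z : F} {a : ℝ} (ha : 0 < a)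
    (hzy : z - y = a • g) :
    HasFDerivAt (fun w => (2 * a)⁻¹ * (‖w - y‖ ^ 2 + a ^ 2)) (InnerProductSpace.toDual ℝ F g) z := by
  have hsq : HasFDerivAt (fun w => ‖w - y‖ ^ 2) (2 • innerSL ℝ (a • g)) z := by
    simpa only [id, ContinuousLinearMap.comp_id, hzy] using
      ((hasFDerivAt_id z).sub_const y).norm_sq
  have hL : (2 * a)⁻¹ • 2 • innerSL ℝ (a • g) = InnerProductSpace.toDual ℝ F g := by
    ext v
    simp only [map_smul, smul_apply, innerSL_apply_apply, smul_eq_mul, nsmul_eq_mul,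
      Nat.cast_ofNat, InnerProductSpace.toDual_apply_apply]
    field_simp
  rw [← hL]
  exact (hsq.add_const (a ^ 2)).const_mul (2 * a)⁻¹

section LeDist

variable (hf : LipschitzWith 1 f) (hle : ∀ w, f w ≤ dist w y) (hx : f x = dist x y)
include hf hle hx

theorem sub_eq_dist_smul_of_hasGradientAt (hg : HasGradientAt f g x) : x - y = dist x y • g := by
  have hline : ∀ s ∈ Icc (0 : ℝ) 1, f (x + s • (y - x)) = f x + s * -dist x y := by
    rintro s ⟨hs0, hs1⟩
    have hleft : dist x (x + s • (y - x)) = s * dist x y := by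
      rw [dist_eq_norm, sub_add_cancel_left, norm_neg, norm_smul, Real.norm_of_nonneg hs0,
        ← dist_eq_norm, dist_comm]
    have hright : dist (x + s • (y - x)) y = (1 - s) * dist x y := by
      rw [dist_eq_norm, show x + s • (y - x) - y = (1 - s) • (x - y) by module, norm_smul,
        Real.norm_of_nonneg (by linarith), ← dist_eq_norm]
    rw [eq_dist_of_dist_add_dist_eq hf hle hx (by rw [hleft, hright]; ring), hright, hx]
    ring
  have hgnorm : ‖g‖ ≤ 1 := by simpa [hg.gradient] using hf.norm_gradient_le (x := x)
  have hyx := eq_smul_of_norm_le_one_of_inner_eq hgnorm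
    (by rw [abs_neg, abs_of_nonneg dist_nonneg, ← dist_eq_norm, dist_comm])
    (hg.inner_eq_of_affine_on_segment hline)
  rw [← neg_sub, hyx, neg_smul, neg_neg]

theorem hasGradientAt_sub_smul_of_le_dist (hg : HasGradientAt f g x) {t : ℝ}
    (ht : t ∈ Ico 0 (dist x y)) : HasGradientAt f g (x - t • g) := by
  obtain ⟨ht0, htd⟩ := ht
  set a := dist x y - t
  have ha : 0 < a := sub_pos.2 htd
  have hxy := sub_eq_dist_smul_of_hasGradientAt hf hle hx hg
  have hgnorm : ‖g‖ = 1 := by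
    have := congrArg norm hxy
    rwa [← dist_eq_norm, norm_smul, Real.norm_of_nonneg dist_nonneg,
      left_eq_mul₀ (ht0.trans_lt htd).ne'] at this
  have hzy : x - t • g - y = a • g := by rw [sub_right_comm, hxy, ← sub_smul]
  have hxz : dist x (x - t • g) = t := by
    rw [dist_eq_norm, sub_sub_cancel, norm_smul, hgnorm, mul_one, Real.norm_of_nonneg ht0]
  have hzy_dist : dist (x - t • g) y = a := by
    rw [dist_eq_norm, hzy, norm_smul, hgnorm, mul_one, Real.norm_of_nonneg ha.le]
  have hfz : f (x - t • g) = a :=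
    (eq_dist_of_dist_add_dist_eq hf hle hx (by rw [hxz, hzy_dist]; ring)).trans hzy_dist
  rw [hasGradientAt_iff_hasFDerivAt] at hg ⊢
  refine hasFDerivAt_of_squeeze (ψ := fun w => f (w + t • g) - t) ?_
    (hasFDerivAt_inv_two_mul_norm_sub_sq_add_sq ha hzy) ?_ ?_ ?_ ?_
  · rw [← sub_add_cancel x (t • g)] at hg
    exact (hg.comp (x - t • g) ((hasFDerivAt_id _).add_const _)).sub_const t
  · refine Eventually.of_forall fun w => ?_
    have := hf.dist_le_mul (w + t • g) w
    rw [NNReal.coe_one, one_mul, Real.dist_eq, abs_le, dist_eq_norm, add_sub_cancel_left,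
      norm_smul, hgnorm, mul_one, Real.norm_of_nonneg ht0] at this
    linarith
  · refine Eventually.of_forall fun w => (hle w).trans ?_
    rw [dist_eq_norm, le_inv_mul_iff₀ (by positivity)]
    nlinarith [sq_nonneg (‖w - y‖ - a)]
  · simp [hx, hfz, a]
  · rw [hfz, hzy, norm_smul, hgnorm, Real.norm_of_nonneg ha.le]
    field_simp
    ring

end LeDist

end Gradient

namespace Metric

variable {E : Type*} [NormedAddCommGroup E] [InnerProductSpace ℝ E] [ProperSpace E] {A : Set E}
  {g x : E}

theorem hasGradientAt_signedInfDist_sub_smul (hg : HasGradientAt (signedInfDist A) g x) {t : ℝ}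
    (ht : t ∈ Ico 0 |signedInfDist A x|) :
    HasGradientAt (signedInfDist A) g (x - t • Real.sign (signedInfDist A x) • g) := by
  obtain ⟨ht0, htd⟩ := ht
  set σ := Real.sign (signedInfDist A x)
  have hσ : |σ| = 1 := by
    rcases Real.sign_apply_eq_of_ne_zero _ (abs_pos.1 (ht0.trans_lt htd)) with h | h <;>
      simp [σ, h]
  have hΓ : (frontier A).Nonempty := nonempty_iff_ne_empty.2 fun h => by
    simp [abs_signedInfDist, h] at htd
    linarith
  obtain ⟨y, hyΓ, hy⟩ := isClosed_frontier.exists_infDist_eq_dist hΓ x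
  set f := fun w => σ * signedInfDist A w
  have habs : ∀ w, |f w| = |signedInfDist A w| := fun w => by rw [abs_mul, hσ, one_mul]
  have hf : LipschitzWith 1 f := LipschitzWith.of_dist_le_mul fun a b => by
    simpa [f, Real.dist_eq, ← mul_sub, abs_mul, hσ] using
      (lipschitzWith_signedInfDist A).dist_le_mul a b
  have hle : ∀ w, f w ≤ dist w y := fun w =>
    (le_abs_self _).trans <| by rw [habs, abs_signedInfDist]; exact infDist_le_dist_of_mem hyΓ
  have hfx_abs : f x = |signedInfDist A x| :=
    (abs_of_nonneg (Real.sign_mul_nonneg _)).symm.trans (habs x)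
  have hfx : f x = dist x y := by rw [hfx_abs, abs_signedInfDist, hy]
  have hσσ : σ * σ = 1 := by rw [← abs_mul_abs_self, hσ, one_mul]
  simpa only [f, ← mul_assoc, hσσ, one_mul, smul_smul, one_smul] using
    (hasGradientAt_sub_smul_of_le_dist hf hle hfx (hg.const_mul σ)
      ⟨ht0, hfx ▸ hfx_abs ▸ htd⟩).const_mul σ

end Metric

theorem signedDist_gradient_constant_along_ray_general
    {n : ℕ} (A : Set (EuclideanSpace ℝ (Fin n)))
    (u : EuclideanSpace ℝ (Fin n) → ℝ)
    (hu_in : ∀ x ∈ A, u x = -Metric.infDist x (frontier A))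
    (hu_out : ∀ x ∉ A, u x = Metric.infDist x (frontier A))
    (x : EuclideanSpace ℝ (Fin n))
    (hd : DifferentiableAt ℝ u x) :
    ∀ t ∈ Set.Ico (0 : ℝ) |u x|,
      DifferentiableAt ℝ u (x - t • Real.sign (u x) • gradient u x) ∧
        gradient u (x - t • Real.sign (u x) • gradient u x) = gradient u x := by
  obtain rfl : u = signedInfDist A := funext fun w => by
    by_cases hw : w ∈ A <;> simp [signedInfDist, hw, hu_in, hu_out]
  intro t ht
  have hgrad := hasGradientAt_signedInfDist_sub_smul hd.hasGradientAt ht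
  exact ⟨hgrad.differentiableAt, hgrad.gradient⟩

/-- Proposition 2 of the paper: the gradient of the signed distance function `u` is constant
along the ray `s t = x - t • sgn (u x) • ∇u x` for `t ∈ [0, |u x|)`. -/
theorem signedDist_gradient_constant_along_ray
    {n : ℕ} (A : Set (EuclideanSpace ℝ (Fin n))) (hA : IsOpen A)
    (hbdd : Bornology.IsBounded A) (hΓ : (frontier A).Nonempty)
    (u : EuclideanSpace ℝ (Fin n) → ℝ)
    (hu_in : ∀ x ∈ A, u x = -Metric.infDist x (frontier A))
    (hu_out : ∀ x ∉ A, u x = Metric.infDist x (frontier A))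
    (x : EuclideanSpace ℝ (Fin n)) (hx : x ∉ frontier A)
    (hd : DifferentiableAt ℝ u x) :
    ∀ t ∈ Set.Ico (0 : ℝ) |u x|,
      DifferentiableAt ℝ u (x - t • Real.sign (u x) • gradient u x) ∧
        gradient u (x - t • Real.sign (u x) • gradient u x) = gradient u x :=
  signedDist_gradient_constant_along_ray_general A u hu_in hu_out x hd
end
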